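/- arXiv:2510.27120 — 3 statements merged into one kernel-verified Lean document; each statement's English description precedes it below -/
import Mathlib

section
/- Let f : ℝⁿ → ℝ be continuously differentiable, T > 0, x₀ ∈ ℝⁿ. If a continuously differentiable path x : [0,T] → ℝⁿ with x(0) = x₀ attains the minimal value f(x₀) of the action J(x) = ∫₀ᵀ ( (1/2)‖∇f(x(t))‖² + (1/2)‖ẋ(t)‖² ) dt + f(x(T)), then x satisfies ẋ(t) = −∇f(x(t)) for every t ∈ [0,T]. -/
/-! Completing the square, `½‖∇f(x)‖² + ½‖ẋ‖² = ½‖ẋ + ∇f(x)‖² - ⟪∇f(x), ẋ⟫`, and the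
fundamental theorem of calculus for `f ∘ x` turn the action into
`J(x) = f(x(0)) + ½ ∫₀ᵀ ‖ẋ + ∇f(x)‖²`. A path attaining `f(x(0))` therefore has a continuous,
nonnegative integrand with zero integral, which must vanish on all of `[0, T]`. -/

open MeasureTheory Real intervalIntegral
open Set
open scoped Gradient InnerProductSpace

theorem ContinuousOn.eq_zero_of_integral_eq_zero_of_nonneg {g : ℝ → ℝ} {a b : ℝ} (hab : a < b)
    (hg : ContinuousOn g (Icc a b)) (hg_nonneg : ∀ t ∈ Icc a b, 0 ≤ g t)
    (hg_int : ∫ t in a..b, g t = 0) : ∀ t ∈ Icc a b, g t = 0 := by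
  by_contra! ⟨c, hc, hgc⟩
  have hpos : 0 < ∫ t in a..b, g t :=
    integral_pos hab hg (fun t ht => hg_nonneg t (Ioc_subset_Icc_self ht))
      ⟨c, hc, (hg_nonneg c hc).lt_of_ne' hgc⟩
  exact hpos.ne' hg_int

theorem half_norm_sq_add_half_norm_sq_eq {E : Type*} [NormedAddCommGroup E]
    [InnerProductSpace ℝ E] (g v : E) :
    (1 / 2) * ‖g‖ ^ 2 + (1 / 2) * ‖v‖ ^ 2 = (1 / 2) * ‖v + g‖ ^ 2 - ⟪g, v⟫_ℝ := by
  rw [norm_add_sq_real, real_inner_comm]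
  ring

section GradientAlongPath

variable {E : Type*} [NormedAddCommGroup E] [InnerProductSpace ℝ E] [CompleteSpace E]
  {f : E → ℝ}

theorem ContDiff.continuous_gradient (hf : ContDiff ℝ 1 f) : Continuous (∇ f) := by
  have h : ∇ f = (InnerProductSpace.toDual ℝ E).symm ∘ fderiv ℝ f := by
    rw [← toDual_comp_gradient, ← Function.comp_assoc,
      LinearIsometryEquiv.symm_comp_self, Function.id_comp]
  rw [h]
  exact (InnerProductSpace.toDual ℝ E).symm.continuous.comp (hf.continuous_fderiv one_ne_zero)

theorem DifferentiableAt.hasDerivAt_comp_inner_gradient {x : ℝ → E} {v : E} {t : ℝ}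
    (hf : DifferentiableAt ℝ f (x t)) (hx : HasDerivAt x v t) :
    HasDerivAt (fun s => f (x s)) ⟪∇ f (x t), v⟫_ℝ t := by
  rw [inner_gradient_left]
  exact hf.hasFDerivAt.comp_hasDerivAt t hx

variable {x x' : ℝ → E} {a b : ℝ}

theorem ContDiff.continuousOn_gradient_comp {s : Set ℝ} (hf : ContDiff ℝ 1 f)
    (hx : ∀ t ∈ s, HasDerivAt x (x' t) t) : ContinuousOn (fun t => ∇ f (x t)) s :=
  hf.continuous_gradient.comp_continuousOn fun t ht => (hx t ht).continuousAt.continuousWithinAt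

theorem integral_inner_gradient_eq_sub (hf : ContDiff ℝ 1 f) (hab : a ≤ b)
    (hx : ∀ t ∈ Icc a b, HasDerivAt x (x' t) t) (hx' : ContinuousOn x' (Icc a b)) :
    ∫ t in a..b, ⟪∇ f (x t), x' t⟫_ℝ = f (x b) - f (x a) := by
  refine integral_eq_sub_of_hasDerivAt (f := fun s => f (x s)) (fun t ht => ?_) ?_
  · rw [uIcc_of_le hab] at ht
    exact (hf.differentiable one_ne_zero _).hasDerivAt_comp_inner_gradient (hx t ht)
  · exact ((hf.continuousOn_gradient_comp hx).inner hx').intervalIntegrable_of_Icc hab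

theorem action_eq_add_half_integral_norm_sq (hf : ContDiff ℝ 1 f) (hab : a ≤ b)
    (hx : ∀ t ∈ Icc a b, HasDerivAt x (x' t) t) (hx' : ContinuousOn x' (Icc a b)) :
    (∫ t in a..b, ((1 / 2) * ‖∇ f (x t)‖ ^ 2 + (1 / 2) * ‖x' t‖ ^ 2)) + f (x b)
      = f (x a) + (1 / 2) * ∫ t in a..b, ‖x' t + ∇ f (x t)‖ ^ 2 := by
  have hgc := hf.continuousOn_gradient_comp hx
  have hsq : IntervalIntegrable (fun t => ‖x' t + ∇ f (x t)‖ ^ 2) volume a b :=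
    ((hx'.add hgc).norm.pow 2).intervalIntegrable_of_Icc hab
  have hinner : IntervalIntegrable (fun t => ⟪∇ f (x t), x' t⟫_ℝ) volume a b :=
    (hgc.inner hx').intervalIntegrable_of_Icc hab
  simp_rw [half_norm_sq_add_half_norm_sq_eq]
  rw [integral_sub (hsq.const_mul _) hinner, intervalIntegral.integral_const_mul,
    integral_inner_gradient_eq_sub hf hab hx hx']
  ring

end GradientAlongPath

/-- Let `f : ℝⁿ → ℝ` be `C¹`, `T > 0`, `x₀ ∈ ℝⁿ`. If a `C¹` path
`x : [0,T] → ℝⁿ` with `x 0 = x₀` attains the minimal value `f x₀` of the action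
`J(x) = ∫₀ᵀ ((1/2)‖∇f(x t)‖² + (1/2)‖x' t‖²) dt + f (x T)`, then `x` satisfies the
gradient-descent equation `x' t = -∇f (x t)` for every `t ∈ [0,T]`. -/
theorem action_minimizer_is_gradient_flow {n : ℕ}
    (f : EuclideanSpace ℝ (Fin n) → ℝ) (hf : ContDiff ℝ 1 f)
    (T : ℝ) (hT : 0 < T) (x₀ : EuclideanSpace ℝ (Fin n))
    (x x' : ℝ → EuclideanSpace ℝ (Fin n))
    (hx : ∀ t ∈ Set.Icc (0 : ℝ) T, HasDerivAt x (x' t) t)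
    (hx' : ContinuousOn x' (Set.Icc (0 : ℝ) T))
    (hx0 : x 0 = x₀)
    (hmin : (∫ t in (0 : ℝ)..T, ((1 / 2) * ‖gradient f (x t)‖ ^ 2 + (1 / 2) * ‖x' t‖ ^ 2))
      + f (x T) = f x₀) :
    ∀ t ∈ Set.Icc (0 : ℝ) T, x' t = -(gradient f (x t)) := by
  have hzero : ∫ t in (0 : ℝ)..T, ‖x' t + ∇ f (x t)‖ ^ 2 = 0 := by
    have := action_eq_add_half_integral_norm_sq hf hT.le hx hx'
    rw [hmin, hx0] at this
    linarith
  have hcont : ContinuousOn (fun t => ‖x' t + ∇ f (x t)‖ ^ 2) (Icc 0 T) :=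
    (hx'.add (hf.continuousOn_gradient_comp hx)).norm.pow 2
  intro t ht
  have hsq := hcont.eq_zero_of_integral_eq_zero_of_nonneg hT (fun _ _ => by positivity) hzero t ht
  rw [pow_eq_zero_iff two_ne_zero, norm_eq_zero] at hsq
  exact eq_neg_of_add_eq_zero_left hsq
end

section
/- Let f : ℝⁿ → ℝ be twice continuously differentiable and suppose its Hessian H_f(x) is positive definite for every x ∈ ℝⁿ. Let T > 0, x₀ ∈ ℝⁿ, and consider the weighted action J_N(x) = ∫₀ᵀ ( (1/2)⟨H_f(x(t))⁻¹ ∇f(x(t)), ∇f(x(t))⟩ + (1/2)⟨H_f(x(t)) ẋ(t), ẋ(t)⟩ ) dt + f(x(T)) over continuously differentiable paths x : [0,T] → ℝⁿ with x(0) = x₀. Then J_N(x) = f(x₀) + (1/2)∫₀ᵀ ⟨H_f(x(t))(ẋ(t) + H_f(x(t))⁻¹∇f(x(t))), ẋ(t) + H_f(x(t))⁻¹∇f(x(t))⟩ dt ≥ f(x₀), and if x* solves the continuous-time Newton flow ẋ*(t) = −H_f(x*(t))⁻¹ ∇f(x*(t)), x*(0) = x₀, then J_N(x*) = f(x₀),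 so the Newton flow is the optimal evolution for this weighted control problem. -/
/-!
Since `H y` is symmetric with inverse `Hinv y`, completing the square turns the integrand of the
action into `(1/2)⟪H(ẋ + H⁻¹∇f), ẋ + H⁻¹∇f⟫ - ⟪∇f(x), ẋ⟫`. The last term is the derivative of
`f ∘ x`, so its integral `f (x T) - f x₀` cancels the terminal cost. Positive definiteness makes
the remaining integral nonnegative, and it vanishes along the Newton flow, where `ẋ + H⁻¹∇f = 0`.
-/

open MeasureTheory Real intervalIntegral RealInnerProductSpace

/-- The weighted (Newton) action
`J_N(x, x') = ∫₀ᵀ ((1/2)⟪H(x t)⁻¹ ∇f(x t), ∇f(x t)⟫ + (1/2)⟪H(x t) x' t, x' t⟫) dt + f (x T)`,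
where `H x` is the Hessian of `f` at `x` and `Hinv x` its inverse. -/
noncomputable def newtonAction {n : ℕ} (f : EuclideanSpace ℝ (Fin n) → ℝ)
    (H Hinv : EuclideanSpace ℝ (Fin n) →
      (EuclideanSpace ℝ (Fin n) →L[ℝ] EuclideanSpace ℝ (Fin n)))
    (T : ℝ) (x x' : ℝ → EuclideanSpace ℝ (Fin n)) : ℝ :=
  (∫ t in (0 : ℝ)..T,
      ((1 / 2) * ⟪Hinv (x t) (gradient f (x t)), gradient f (x t)⟫
        + (1 / 2) * ⟪H (x t) (x' t), x' t⟫)) + f (x T)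

section Gradient

variable {E : Type*} [NormedAddCommGroup E] [InnerProductSpace ℝ E]

/-- Completing the square in the quadratic form of `A`. -/
theorem inner_inverse_add_inner_eq {A B : E →L[ℝ] E} (hA : (A : E →ₗ[ℝ] E).IsSymmetric)
    (hAB : A * B = 1) (g v : E) :
    (1 / 2) * ⟪B g, g⟫ + (1 / 2) * ⟪A v, v⟫
      = (1 / 2) * ⟪A (v + B g), v + B g⟫ - ⟪g, v⟫ := by
  have hABg : A (B g) = g := by simpa using congr($hAB g)
  have hcross : ⟪A v, B g⟫ = ⟪g, v⟫ := by
    rw [show ⟪A v, B g⟫ = ⟪v, A (B g)⟫ from hA v (B g), hABg, real_inner_comm]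
  rw [map_add, hABg, inner_add_left, inner_add_right, inner_add_right, hcross,
    real_inner_comm g (B g)]
  ring

variable [CompleteSpace E]

theorem ContDiff.gradient {f : E → ℝ} {k : WithTop ℕ∞} (hf : ContDiff ℝ (k + 1) f) :
    ContDiff ℝ k (gradient f) :=
  (InnerProductSpace.toDual ℝ E).symm.toContinuousLinearEquiv.contDiff.comp
    (hf.fderiv_right le_rfl)

theorem continuous_of_hasFDerivAt_gradient {f : E → ℝ} (hf : ContDiff ℝ 2 f)
    {H : E → E →L[ℝ] E} (hH : ∀ y, HasFDerivAt (gradient f) (H y) y) : Continuous H := by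
  rw [show H = fderiv ℝ (gradient f) from funext fun y => (hH y).fderiv.symm]
  exact (ContDiff.gradient (k := 1) hf).continuous_fderiv one_ne_zero

/-- Schwarz's theorem for the Hessian, seen as the derivative of the gradient. -/
theorem isSymmetric_of_hasFDerivAt_gradient {f : E → ℝ} (hf : Differentiable ℝ f)
    {H : E →L[ℝ] E} {y : E} (hH : HasFDerivAt (gradient f) H y) :
    (H : E →ₗ[ℝ] E).IsSymmetric := by
  let L : E →L[ℝ] StrongDual ℝ E :=
    (InnerProductSpace.toDual ℝ E).toLinearIsometry.toContinuousLinearMap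
  have hfL : ∀ z, HasFDerivAt f (L (gradient f z)) z := fun z => (hf z).hasGradientAt
  intro v w
  have h : ⟪H v, w⟫ = ⟪H w, v⟫ := second_derivative_symmetric hfL (L.hasFDerivAt.comp y hH) v w
  show ⟪H v, w⟫ = ⟪v, H w⟫
  rw [real_inner_comm (H w) v, h]

theorem integral_inner_gradient_eq_sub_s3 {f : E → ℝ} (hf : Differentiable ℝ f)
    (hgrad : Continuous (gradient f)) {a b : ℝ} {p p' : ℝ → E}
    (hp : ∀ t ∈ Set.uIcc a b, HasDerivAt p (p' t) t) (hp' : ContinuousOn p' (Set.uIcc a b)) :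
    ∫ t in a..b, ⟪gradient f (p t), p' t⟫ = f (p b) - f (p a) := by
  refine integral_eq_sub_of_hasDerivAt (f := fun t => f (p t)) (fun t ht => ?_)
    ((hgrad.comp_continuousOn (HasDerivAt.continuousOn hp)).inner (𝕜 := ℝ) hp').intervalIntegrable
  exact (hasGradientAt_iff_hasFDerivAt.mp (hf (p t)).hasGradientAt).comp_hasDerivAt t (hp t ht)

end Gradient

theorem Continuous.of_mul_eq_one {X R : Type*} [TopologicalSpace X] [NormedRing R]
    [CompleteSpace R] {a b : X → R} (ha : Continuous a) (hba : ∀ y, b y * a y = 1)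
    (hab : ∀ y, a y * b y = 1) : Continuous b := by
  have hb : b = fun y => Ring.inverse (a y) := funext fun y =>
    (Ring.inverse_unit ⟨a y, b y, hab y, hba y⟩).symm
  rw [hb, continuous_iff_continuousAt]
  intro y
  exact (NormedRing.inverse_continuousAt ⟨a y, b y, hab y, hba y⟩).comp_of_eq ha.continuousAt rfl

section NewtonAction

variable {n : ℕ} {f : EuclideanSpace ℝ (Fin n) → ℝ}
  {H Hinv : EuclideanSpace ℝ (Fin n) → (EuclideanSpace ℝ (Fin n) →L[ℝ] EuclideanSpace ℝ (Fin n))}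

theorem newtonAction_eq_add_integral (hf : Differentiable ℝ f) (hgrad : Continuous (gradient f))
    (hH : Continuous H) (hHinv : Continuous Hinv)
    (hsymm : ∀ y, (H y : EuclideanSpace ℝ (Fin n) →ₗ[ℝ] EuclideanSpace ℝ (Fin n)).IsSymmetric)
    (hright : ∀ y, H y * Hinv y = 1) {T : ℝ} (hT : 0 ≤ T) {p p' : ℝ → EuclideanSpace ℝ (Fin n)}
    (hp : ∀ t ∈ Set.Icc 0 T, HasDerivAt p (p' t) t) (hp' : ContinuousOn p' (Set.Icc 0 T)) :
    newtonAction f H Hinv T p p' = f (p 0) + (1 / 2) * ∫ t in (0 : ℝ)..T,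
      ⟪H (p t) (p' t + Hinv (p t) (gradient f (p t))),
        p' t + Hinv (p t) (gradient f (p t))⟫ := by
  rw [← Set.uIcc_of_le hT] at hp hp'
  have hpc := HasDerivAt.continuousOn hp
  have hresidual : ContinuousOn (fun t => p' t + Hinv (p t) (gradient f (p t))) (Set.uIcc 0 T) :=
    hp'.add ((hHinv.comp_continuousOn hpc).clm_apply (hgrad.comp_continuousOn hpc))
  have hQ : IntervalIntegrable (fun t => ⟪H (p t) (p' t + Hinv (p t) (gradient f (p t))),
      p' t + Hinv (p t) (gradient f (p t))⟫) volume 0 T :=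
    (((hH.comp_continuousOn hpc).clm_apply hresidual).inner (𝕜 := ℝ) hresidual).intervalIntegrable
  have hB : IntervalIntegrable (fun t => ⟪gradient f (p t), p' t⟫) volume 0 T :=
    ((hgrad.comp_continuousOn hpc).inner (𝕜 := ℝ) hp').intervalIntegrable
  unfold newtonAction
  simp_rw [inner_inverse_add_inner_eq (hsymm _) (hright _)]
  rw [integral_sub (hQ.const_mul _) hB, intervalIntegral.integral_const_mul,
    integral_inner_gradient_eq_sub_s3 hf hgrad hp hp']
  ring

end NewtonAction

/-- Let `f : ℝⁿ → ℝ` be `C²` with everywhere positive definite Hessian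
`H_f` (with inverse `Hinv`). For every `C¹` path `x` with `x 0 = x₀`:
`J_N(x) = f x₀ + (1/2)∫₀ᵀ ⟪H(x t)(x' t + H(x t)⁻¹∇f(x t)), x' t + H(x t)⁻¹∇f(x t)⟫ dt ≥ f x₀`,
and if `x⋆` solves the continuous-time Newton flow `ẋ⋆ = -H(x⋆)⁻¹∇f(x⋆)`, `x⋆ 0 = x₀`, then
`J_N(x⋆) = f x₀`: Newton's flow is the optimal evolution of the weighted control problem. -/
theorem newton_flow_optimal {n : ℕ}
    (f : EuclideanSpace ℝ (Fin n) → ℝ) (hf : ContDiff ℝ 2 f)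
    (H Hinv : EuclideanSpace ℝ (Fin n) →
      (EuclideanSpace ℝ (Fin n) →L[ℝ] EuclideanSpace ℝ (Fin n)))
    (hHess : ∀ y, HasFDerivAt (gradient f) (H y) y)
    (hpos : ∀ y v, v ≠ 0 → 0 < ⟪H y v, v⟫)
    (hinv₁ : ∀ y, (Hinv y).comp (H y) = ContinuousLinearMap.id ℝ (EuclideanSpace ℝ (Fin n)))
    (hinv₂ : ∀ y, (H y).comp (Hinv y) = ContinuousLinearMap.id ℝ (EuclideanSpace ℝ (Fin n)))
    (T : ℝ) (hT : 0 < T) (x₀ : EuclideanSpace ℝ (Fin n))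
    (x x' : ℝ → EuclideanSpace ℝ (Fin n))
    (hx : ∀ t ∈ Set.Icc (0 : ℝ) T, HasDerivAt x (x' t) t)
    (hx' : ContinuousOn x' (Set.Icc (0 : ℝ) T))
    (hx0 : x 0 = x₀)
    (xs : ℝ → EuclideanSpace ℝ (Fin n)) (hxs0 : xs 0 = x₀) :
    newtonAction f H Hinv T x x'
        = f x₀ + (1 / 2) * ∫ t in (0 : ℝ)..T,
            ⟪H (x t) (x' t + Hinv (x t) (gradient f (x t))),
              x' t + Hinv (x t) (gradient f (x t))⟫
      ∧ newtonAction f H Hinv T x x' ≥ f x₀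
      ∧ ((∀ t ∈ Set.Icc (0 : ℝ) T,
            HasDerivAt xs (-(Hinv (xs t) (gradient f (xs t)))) t) →
          newtonAction f H Hinv T xs (fun t => -(Hinv (xs t) (gradient f (xs t)))) = f x₀) := by
  have hfd : Differentiable ℝ f := hf.differentiable (by norm_num)
  have hgrad : Continuous (gradient f) := (ContDiff.gradient (k := 1) hf).continuous
  have hH : Continuous H := continuous_of_hasFDerivAt_gradient hf hHess
  have hHinv : Continuous Hinv := hH.of_mul_eq_one hinv₁ hinv₂
  have hJ := @newtonAction_eq_add_integral n f H Hinv hfd hgrad hH hHinv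
    (fun y => isSymmetric_of_hasFDerivAt_gradient hfd (hHess y)) hinv₂ T hT.le
  have hquad : ∀ y v, 0 ≤ ⟪H y v, v⟫ := fun y v =>
    (eq_or_ne v 0).elim (fun hv => by simp [hv]) fun hv => (hpos y v hv).le
  have hJx := hJ hx hx'
  rw [hx0] at hJx
  refine ⟨hJx, ?_, fun hxs => ?_⟩
  · rw [hJx, ge_iff_le, le_add_iff_nonneg_right]
    exact mul_nonneg (by norm_num) (integral_nonneg hT.le fun t _ => hquad _ _)
  · have hxsc := HasDerivAt.continuousOn hxs
    rw [hJ hxs ((hHinv.comp_continuousOn hxsc).clm_apply (hgrad.comp_continuousOn hxsc)).neg, hxs0]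
    simp
end

section
/- Let ρ̄ : ℝⁿ → (0,∞) be a smooth strictly positive probability density. Let ρ : [0,1] × ℝⁿ → (0,∞) be smooth with ∫ ρ(t,x) dx = 1 for each t, and let v be a smooth time-dependent vector field with ∂ρ/∂t + ∇·(vρ) = 0. Assume that t ↦ D(ρ_t‖ρ̄) is differentiable with derivative given by differentiating under the integral sign, that ∫ ∇·((1 + log(ρ_t/ρ̄)) v_t ρ_t) dx = 0 for each t, and that all the integrals below are finite. Then the action J(ρ,v) = (1/2)∫₀¹∫_{ℝⁿ} ( ‖v(t,x)‖² + ‖∇log(ρ_t(x)/ρ̄(x))‖² ) ρ_t(x) dx dt + D(ρ₁‖ρ̄) satisfies the exact identity J(ρ,v) = D(ρ₀‖ρ̄) + (1/2)∫₀¹∫_{ℝⁿ} ‖v(t,x) + ∇log(ρ_t(x)/ρ̄(x))‖² ρ_t(x) dx dt. -/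
open MeasureTheory Real RealInnerProductSpace intervalIntegral

/-- Divergence of a vector field on `ℝⁿ`: `(∇·w)(x) = ∑ᵢ ∂wⁱ/∂xⁱ (x)`. -/
noncomputable def vdiv {n : ℕ} (w : EuclideanSpace ℝ (Fin n) → EuclideanSpace ℝ (Fin n))
    (x : EuclideanSpace ℝ (Fin n)) : ℝ :=
  ∑ i, fderiv ℝ w x (EuclideanSpace.single i 1) i


lemma inner_gradient_eq_fderiv {E : Type*} [NormedAddCommGroup E] [InnerProductSpace ℝ E]
    [CompleteSpace E] (f : E → ℝ) (x u : E) :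
    ⟪gradient f x, u⟫ = fderiv ℝ f x u := by
  rw [← InnerProductSpace.toDual_apply_apply, gradient,
    LinearIsometryEquiv.apply_symm_apply]

lemma gradient_const_add' {E : Type*} [NormedAddCommGroup E] [InnerProductSpace ℝ E]
    [CompleteSpace E] (f : E → ℝ) (c : ℝ) (x : E) :
    gradient (fun y => c + f y) x = gradient f x := by
  simp [gradient, fderiv_const_add]

lemma euclid_sum_single {n : ℕ} (x : EuclideanSpace ℝ (Fin n)) :
    ∑ i, x i • EuclideanSpace.single i 1 = x := by
  have := (EuclideanSpace.basisFun (Fin n) ℝ).sum_repr x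
  simpa [EuclideanSpace.basisFun_apply, EuclideanSpace.basisFun_repr] using this

lemma vdiv_smul {n : ℕ} (c : EuclideanSpace ℝ (Fin n) → ℝ)
    (w : EuclideanSpace ℝ (Fin n) → EuclideanSpace ℝ (Fin n))
    (x : EuclideanSpace ℝ (Fin n)) (hc : DifferentiableAt ℝ c x)
    (hw : DifferentiableAt ℝ w x) :
    vdiv (fun y => c y • w y) x = c x * vdiv w x + ⟪gradient c x, w x⟫ := by
  have hF : fderiv ℝ (fun y => c y • w y) x
      = c x • fderiv ℝ w x + (fderiv ℝ c x).smulRight (w x) :=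
    (hc.hasFDerivAt.smul hw.hasFDerivAt).fderiv
  have h2 : ∑ i, fderiv ℝ c x (EuclideanSpace.single i 1) * w x i
      = ⟪gradient c x, w x⟫ := by
    rw [inner_gradient_eq_fderiv]
    calc ∑ i, fderiv ℝ c x (EuclideanSpace.single i 1) * w x i
        = ∑ i, fderiv ℝ c x (w x i • EuclideanSpace.single i 1) := by
          simp [mul_comm]
      _ = fderiv ℝ c x (∑ i, w x i • EuclideanSpace.single i 1) := by
          rw [map_sum]
      _ = fderiv ℝ c x (w x) := by rw [euclid_sum_single]
  simp only [vdiv, hF, ContinuousLinearMap.add_apply, ContinuousLinearMap.smul_apply,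
    ContinuousLinearMap.smulRight_apply, PiLp.add_apply, PiLp.smul_apply, smul_eq_mul]
  rw [Finset.sum_add_distrib, ← Finset.mul_sum, h2]

/-- Let `ρb` be a smooth strictly positive probability density and
`(ρ_t, v)` a smooth positive flow of probability densities on `[0,1]` satisfying the
continuity equation.  Under differentiation under the integral sign, vanishing boundary
terms, and finiteness of all the integrals involved, the action
`J(ρ,v) = (1/2)∫₀¹∫ (‖v‖² + ‖∇log(ρ_t/ρb)‖²) ρ_t dx dt + D(ρ₁‖ρb)` satisfies the exact
identity `J(ρ,v) = D(ρ₀‖ρb) + (1/2)∫₀¹∫ ‖v + ∇log(ρ_t/ρb)‖² ρ_t dx dt`. -/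
theorem wasserstein_action_identity {n : ℕ}
    (ρb : EuclideanSpace ℝ (Fin n) → ℝ) (hρbs : ContDiff ℝ (⊤ : ℕ∞) ρb)
    (hρbpos : ∀ x, 0 < ρb x) (hρb1 : ∫ x, ρb x = 1)
    (ρ : ℝ → EuclideanSpace ℝ (Fin n) → ℝ)
    (hρs : ContDiff ℝ (⊤ : ℕ∞) (fun p : ℝ × EuclideanSpace ℝ (Fin n) => ρ p.1 p.2))
    (hρpos : ∀ t x, 0 < ρ t x) (hρ1 : ∀ t, ∫ x, ρ t x = 1)
    (v : ℝ → EuclideanSpace ℝ (Fin n) → EuclideanSpace ℝ (Fin n))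
    (hvs : ContDiff ℝ (⊤ : ℕ∞) (fun p : ℝ × EuclideanSpace ℝ (Fin n) => v p.1 p.2))
    (hce : ∀ t ∈ Set.Icc (0 : ℝ) 1, ∀ x,
      deriv (fun s => ρ s x) t + vdiv (fun y => ρ t y • v t y) x = 0)
    (hDUI : ∀ t ∈ Set.Icc (0 : ℝ) 1,
      HasDerivAt (fun s => ∫ x, ρ s x * Real.log (ρ s x / ρb x))
        (∫ x, deriv (fun s => ρ s x) t * (1 + Real.log (ρ t x / ρb x))) t)
    (hbdry : ∀ t ∈ Set.Icc (0 : ℝ) 1,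
      (Integrable (fun x =>
          vdiv (fun y => (1 + Real.log (ρ t y / ρb y)) • (ρ t y • v t y)) x))
        ∧ ∫ x, vdiv (fun y => (1 + Real.log (ρ t y / ρb y)) • (ρ t y • v t y)) x = 0)
    (hfin₁ : ∀ t ∈ Set.Icc (0 : ℝ) 1, Integrable (fun x => ‖v t x‖ ^ 2 * ρ t x))
    (hfin₂ : ∀ t ∈ Set.Icc (0 : ℝ) 1,
      Integrable (fun x => ‖gradient (fun y => Real.log (ρ t y / ρb y)) x‖ ^ 2 * ρ t x))
    (hfin₃ : IntervalIntegrable (fun t => ∫ x,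
        (‖v t x‖ ^ 2 + ‖gradient (fun y => Real.log (ρ t y / ρb y)) x‖ ^ 2) * ρ t x)
      MeasureTheory.volume 0 1)
    (hfin₄ : IntervalIntegrable (fun t => ∫ x,
        ‖v t x + gradient (fun y => Real.log (ρ t y / ρb y)) x‖ ^ 2 * ρ t x)
      MeasureTheory.volume 0 1) :
    (1 / 2) * (∫ t in (0 : ℝ)..1, ∫ x,
        (‖v t x‖ ^ 2 + ‖gradient (fun y => Real.log (ρ t y / ρb y)) x‖ ^ 2) * ρ t x)
      + (∫ x, ρ 1 x * Real.log (ρ 1 x / ρb x))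
      = (∫ x, ρ 0 x * Real.log (ρ 0 x / ρb x))
        + (1 / 2) * ∫ t in (0 : ℝ)..1, ∫ x,
            ‖v t x + gradient (fun y => Real.log (ρ t y / ρb y)) x‖ ^ 2 * ρ t x := by
  set g : ℝ → EuclideanSpace ℝ (Fin n) → EuclideanSpace ℝ (Fin n) :=
    fun t x => gradient (fun y => Real.log (ρ t y / ρb y)) x with hg
  -- smoothness of time slices
  have hρt : ∀ t : ℝ, ContDiff ℝ (⊤ : ℕ∞) (ρ t) := fun t =>
    hρs.comp (ContDiff.prodMk (contDiff_const (c := t)) contDiff_id)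
  have hvt : ∀ t : ℝ, ContDiff ℝ (⊤ : ℕ∞) (v t) := fun t =>
    hvs.comp (ContDiff.prodMk (contDiff_const (c := t)) contDiff_id)
  have hLt : ∀ t : ℝ, ContDiff ℝ (⊤ : ℕ∞) (fun y => Real.log (ρ t y / ρb y)) := by
    intro t
    rw [contDiff_iff_contDiffAt]
    intro x
    exact (((hρt t).contDiffAt.div hρbs.contDiffAt (hρbpos x).ne').log
      (div_pos (hρpos t x) (hρbpos x)).ne')
  have hgc : ∀ t : ℝ, Continuous (g t) := by
    intro t
    simp only [hg, gradient]
    exact (InnerProductSpace.toDual ℝ _).symm.continuous.comp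
      ((hLt t).continuous_fderiv (by simp))
  -- integrability facts
  have hIvg : ∀ t ∈ Set.Icc (0 : ℝ) 1,
      Integrable (fun x => ⟪v t x, g t x⟫ * ρ t x) := by
    intro t ht
    refine ((hfin₁ t ht).add (hfin₂ t ht)).mono'
      ((((hvt t).continuous.inner (hgc t)).mul (hρt t).continuous).aestronglyMeasurable) ?_
    filter_upwards with x
    have h1 : |⟪v t x, g t x⟫| ≤ ‖v t x‖ * ‖g t x‖ := abs_real_inner_le_norm _ _
    have hρ := (hρpos t x).le
    rw [Real.norm_eq_abs, abs_mul, abs_of_pos (hρpos t x)]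
    simp only [Pi.add_apply]
    nlinarith [mul_le_mul_of_nonneg_right h1 hρ, sq_nonneg (‖v t x‖ - ‖g t x‖),
      norm_nonneg (v t x), norm_nonneg (g t x)]
  have hIplus : ∀ t ∈ Set.Icc (0 : ℝ) 1,
      Integrable (fun x => ‖v t x + g t x‖ ^ 2 * ρ t x) := by
    intro t ht
    refine (((hfin₁ t ht).add (hfin₂ t ht)).const_mul 2).mono'
      ((((hvt t).continuous.add (hgc t)).norm.pow 2).mul (hρt t).continuous).aestronglyMeasurable ?_
    filter_upwards with x
    have h1 : |⟪v t x, g t x⟫| ≤ ‖v t x‖ * ‖g t x‖ := abs_real_inner_le_norm _ _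
    have h2 := norm_add_sq_real (v t x) (g t x)
    have hρ := (hρpos t x).le
    rw [Real.norm_eq_abs, abs_mul, abs_of_pos (hρpos t x), abs_of_nonneg (by positivity : (0:ℝ) ≤ ‖v t x + g t x‖ ^ 2)]
    simp only [Pi.add_apply]
    show ‖v t x + g t x‖ ^ 2 * ρ t x ≤ 2 * (‖v t x‖ ^ 2 * ρ t x + ‖g t x‖ ^ 2 * ρ t x)
    nlinarith [mul_le_mul_of_nonneg_right (le_abs_self ⟪v t x, g t x⟫) hρ,
      mul_le_mul_of_nonneg_right h1 hρ,
      mul_nonneg (sq_nonneg (‖v t x‖ - ‖g t x‖)) hρ,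
      mul_le_mul_of_nonneg_right h2.le hρ]
  have hIsum : ∀ t ∈ Set.Icc (0 : ℝ) 1,
      Integrable (fun x => (‖v t x‖ ^ 2 + ‖g t x‖ ^ 2) * ρ t x) := by
    intro t ht
    refine ((hfin₁ t ht).add (hfin₂ t ht)).congr (ae_of_all _ fun x => ?_)
    simp only [Pi.add_apply, add_mul, hg]
  -- key pointwise-in-t identity
  have key : ∀ t ∈ Set.Icc (0 : ℝ) 1,
      (∫ x, deriv (fun s => ρ s x) t * (1 + Real.log (ρ t x / ρb x)))
        = ∫ x, ⟪v t x, g t x⟫ * ρ t x := by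
    intro t ht
    have hptwise : ∀ x, deriv (fun s => ρ s x) t * (1 + Real.log (ρ t x / ρb x))
        = ⟪v t x, g t x⟫ * ρ t x
          - vdiv (fun y => (1 + Real.log (ρ t y / ρb y)) • (ρ t y • v t y)) x := by
      intro x
      have hd : deriv (fun s => ρ s x) t = - vdiv (fun y => ρ t y • v t y) x := by
        have := hce t ht x; linarith
      have hsm := vdiv_smul (fun y => 1 + Real.log (ρ t y / ρb y)) (fun y => ρ t y • v t y) x
        (((contDiff_const.add (hLt t)).differentiable (by simp)).differentiableAt)
        ((((hρt t).smul (hvt t)).differentiable (by simp)).differentiableAt)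
      rw [hsm, gradient_const_add']
      have hin : ⟪gradient (fun y => Real.log (ρ t y / ρb y)) x, ρ t x • v t x⟫
          = ⟪v t x, g t x⟫ * ρ t x := by
        rw [real_inner_smul_right, real_inner_comm]; simp only [hg]; ring
      rw [hin, hd]; ring
    calc (∫ x, deriv (fun s => ρ s x) t * (1 + Real.log (ρ t x / ρb x)))
        = ∫ x, (⟪v t x, g t x⟫ * ρ t x
            - vdiv (fun y => (1 + Real.log (ρ t y / ρb y)) • (ρ t y • v t y)) x) := by
          congr 1; funext x; exact hptwise x
      _ = (∫ x, ⟪v t x, g t x⟫ * ρ t x)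
            - ∫ x, vdiv (fun y => (1 + Real.log (ρ t y / ρb y)) • (ρ t y • v t y)) x :=
          integral_sub (hIvg t ht) (hbdry t ht).1
      _ = ∫ x, ⟪v t x, g t x⟫ * ρ t x := by rw [(hbdry t ht).2, sub_zero]
  -- polarization: G in terms of the two energy integrals
  have hGrep : ∀ t ∈ Set.Icc (0 : ℝ) 1,
      (∫ x, ⟪v t x, g t x⟫ * ρ t x)
        = (1 / 2) * ((∫ x, ‖v t x + g t x‖ ^ 2 * ρ t x)
            - ∫ x, (‖v t x‖ ^ 2 + ‖g t x‖ ^ 2) * ρ t x) := by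
    intro t ht
    have hpt : ∀ x, ⟪v t x, g t x⟫ * ρ t x
        = (1 / 2) * (‖v t x + g t x‖ ^ 2 * ρ t x - (‖v t x‖ ^ 2 + ‖g t x‖ ^ 2) * ρ t x) := by
      intro x
      rw [norm_add_sq_real]; ring
    calc (∫ x, ⟪v t x, g t x⟫ * ρ t x)
        = ∫ x, (1 / 2) * (‖v t x + g t x‖ ^ 2 * ρ t x
            - (‖v t x‖ ^ 2 + ‖g t x‖ ^ 2) * ρ t x) := by
          congr 1; funext x; exact hpt x
      _ = (1 / 2) * ∫ x, (‖v t x + g t x‖ ^ 2 * ρ t x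
            - (‖v t x‖ ^ 2 + ‖g t x‖ ^ 2) * ρ t x) := integral_const_mul _ _
      _ = (1 / 2) * ((∫ x, ‖v t x + g t x‖ ^ 2 * ρ t x)
            - ∫ x, (‖v t x‖ ^ 2 + ‖g t x‖ ^ 2) * ρ t x) := by
          rw [integral_sub (hIplus t ht) (hIsum t ht)]
  -- FTC
  have huIcc : Set.uIcc (0 : ℝ) 1 = Set.Icc (0 : ℝ) 1 := Set.uIcc_of_le zero_le_one
  have hGint : IntervalIntegrable (fun t => ∫ x, ⟪v t x, g t x⟫ * ρ t x)
      MeasureTheory.volume 0 1 := by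
    refine ((hfin₄.sub hfin₃).const_mul (1 / 2)).congr ?_
    have hsub : Set.uIoc (0 : ℝ) 1 ⊆ Set.Icc 0 1 := by
      rw [Set.uIoc_of_le zero_le_one]; exact Set.Ioc_subset_Icc_self
    intro t ht
    exact (hGrep t (hsub ht)).symm
  have hFTC : (∫ t in (0 : ℝ)..1, ∫ x, ⟪v t x, g t x⟫ * ρ t x)
      = (∫ x, ρ 1 x * Real.log (ρ 1 x / ρb x)) - ∫ x, ρ 0 x * Real.log (ρ 0 x / ρb x) := by
    refine integral_eq_sub_of_hasDerivAt (f := fun s => ∫ x, ρ s x * Real.log (ρ s x / ρb x)) ?_ hGint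
    intro t ht
    rw [huIcc] at ht
    have := hDUI t ht
    rwa [key t ht] at this
  have hGval : (∫ t in (0 : ℝ)..1, ∫ x, ⟪v t x, g t x⟫ * ρ t x)
      = (1 / 2) * ((∫ t in (0 : ℝ)..1, ∫ x, ‖v t x + g t x‖ ^ 2 * ρ t x)
          - ∫ t in (0 : ℝ)..1, ∫ x, (‖v t x‖ ^ 2 + ‖g t x‖ ^ 2) * ρ t x) := by
    rw [intervalIntegral.integral_congr (g := fun t => (1 / 2) *
        ((∫ x, ‖v t x + g t x‖ ^ 2 * ρ t x) - ∫ x, (‖v t x‖ ^ 2 + ‖g t x‖ ^ 2) * ρ t x))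
        (fun t ht => hGrep t (huIcc ▸ ht))]
    rw [intervalIntegral.integral_const_mul, intervalIntegral.integral_sub hfin₄ hfin₃]
  rw [hGval] at hFTC
  simp only [hg] at hFTC ⊢
  linarith
end
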